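/- arXiv:1408.1630 — 2 statements merged into one kernel-verified Lean document; each statement's English description precedes it below -/
import Mathlib

section
/- Let H be an n×n complex Hermitian matrix, let λ₁ ≥ ... ≥ λₙ be its eigenvalues arranged in decreasing order, and let μ₁ ≥ ... ≥ μₙ be its (real) diagonal entries arranged in decreasing order. Then μ ≤ λ, i.e. Σ_{j=1}^i μⱼ ≤ Σ_{j=1}^i λⱼ for every i = 1,...,n−1, and Σ_{j=1}^n μⱼ = Σ_{j=1}^n λⱼ (both sums equal the trace of H). -/
/-!
Writing `H = U D Uᴴ` with `U` unitary, the diagonal of `H` is `B λ` for the matrix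
`B = (|U j k|²)`, which is doubly stochastic. A doubly stochastic matrix cannot increase the
partial sums of a decreasing vector: the weights `∑_{j ≤ i} B j k` lie in `[0, 1]` and add up to
`i + 1`, so they put at most as much mass on the top `i + 1` entries as the indicator of those
entries does.
-/

open Matrix Finset

section Majorization

variable {ι : Type*} [Fintype ι] [LinearOrder ι] [LocallyFiniteOrderBot ι]

theorem sum_mul_le_sum_Iic_of_antitone {x t : ι → ℝ} (hx : Antitone x)
    (ht₀ : ∀ k, 0 ≤ t k) (ht₁ : ∀ k, t k ≤ 1) (i : ι) (ht : ∑ k, t k = #(Iic i)) :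
    ∑ k, t k * x k ≤ ∑ k ∈ Iic i, x k := by
  -- Subtracting the threshold `x i` makes the terms nonnegative on `Iic i`, nonpositive off it.
  have hterm : ∀ k, t k * (x k - x i) ≤ if k ≤ i then x k - x i else 0 := by
    intro k
    split_ifs with hk
    · exact mul_le_of_le_one_left (sub_nonneg.2 (hx hk)) (ht₁ k)
    · exact mul_nonpos_of_nonneg_of_nonpos (ht₀ k) (sub_nonpos.2 (hx (le_of_not_ge hk)))
  have hsum : ∑ k, t k * (x k - x i) ≤ ∑ k ∈ Iic i, (x k - x i) := by
    rw [← filter_ge_eq_Iic, sum_filter]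
    exact sum_le_sum fun k _ => hterm k
  simp only [mul_sub, sum_sub_distrib, ← sum_mul, ht, sum_const, nsmul_eq_mul] at hsum
  linarith

theorem sum_Iic_mulVec_le_of_mem_doublyStochastic {M : Matrix ι ι ℝ} [DecidableEq ι]
    (hM : M ∈ doublyStochastic ℝ ι) {x : ι → ℝ} (hx : Antitone x) (i : ι) :
    ∑ j ∈ Iic i, (M *ᵥ x) j ≤ ∑ j ∈ Iic i, x j := by
  have hcol : ∀ k, ∑ j ∈ Iic i, M j k ≤ 1 := fun k =>
    sum_col_of_mem_doublyStochastic hM k ▸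
      sum_le_sum_of_subset_of_nonneg (subset_univ _) fun j _ _ => nonneg_of_mem_doublyStochastic hM
  have hrow : ∑ k, ∑ j ∈ Iic i, M j k = #(Iic i) := by
    rw [sum_comm]
    simp [sum_row_of_mem_doublyStochastic hM]
  have hmulVec : ∑ j ∈ Iic i, (M *ᵥ x) j = ∑ k, (∑ j ∈ Iic i, M j k) * x k := by
    simp only [mulVec, dotProduct, sum_mul]
    exact sum_comm
  rw [hmulVec]
  exact sum_mul_le_sum_Iic_of_antitone hx
    (fun k => sum_nonneg fun j _ => nonneg_of_mem_doublyStochastic hM) hcol i hrow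

end Majorization

namespace Matrix

variable {𝕜 n : Type*} [RCLike 𝕜] [Fintype n] [DecidableEq n]

theorem norm_sq_apply_mem_doublyStochastic_of_mem_unitaryGroup {U : Matrix n n 𝕜}
    (hU : U ∈ unitaryGroup n 𝕜) :
    (of fun i j => ‖U i j‖ ^ 2) ∈ doublyStochastic ℝ n := by
  rw [mem_doublyStochastic_iff_sum]
  refine ⟨fun i j => sq_nonneg _, fun i => ?_, fun j => ?_⟩
  · have h := congr_fun₂ ((mem_unitaryGroup_iff).1 hU) i i
    simp only [mul_apply, star_apply, RCLike.star_def, RCLike.mul_conj, one_apply_eq] at h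
    exact_mod_cast h
  · have h := congr_fun₂ ((mem_unitaryGroup_iff').1 hU) j j
    simp only [mul_apply, star_apply, RCLike.star_def, RCLike.conj_mul, one_apply_eq] at h
    exact_mod_cast h

theorem IsHermitian.re_apply_self_eq_sum_norm_sq_mul_eigenvalues {A : Matrix n n 𝕜}
    (hA : A.IsHermitian) (i : n) :
    RCLike.re (A i i) =
      ∑ k, ‖(hA.eigenvectorUnitary : Matrix n n 𝕜) i k‖ ^ 2 * hA.eigenvalues k := by
  set U : Matrix n n 𝕜 := (hA.eigenvectorUnitary : Matrix n n 𝕜)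
  have h : A i i = ∑ k, ((‖U i k‖ ^ 2 * hA.eigenvalues k : ℝ) : 𝕜) := by
    conv_lhs => rw [hA.spectral_theorem, Unitary.conjStarAlgAut_apply]
    rw [mul_apply]
    simp only [mul_diagonal, star_apply, RCLike.star_def, Function.comp_apply]
    refine sum_congr rfl fun k _ => ?_
    rw [mul_right_comm, RCLike.mul_conj]
    push_cast; ring
  rw [h, map_sum]
  simp only [RCLike.ofReal_re]

end Matrix

theorem schur_diagonal_majorized_by_eigenvalues_general {n : ℕ}
    (H : Matrix (Fin n) (Fin n) ℂ) (hH : H.IsHermitian)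
    (lam mu : Fin n → ℝ) (hlam : Antitone lam)
    (hlam_eig : ∃ σ : Equiv.Perm (Fin n), ∀ i, lam i = hH.eigenvalues (σ i))
    (hmu_diag : ∃ τ : Equiv.Perm (Fin n), ∀ i, mu i = (H (τ i) (τ i)).re) :
    (∀ i : Fin n,
        ∑ j ∈ Finset.univ.filter (fun j => j ≤ i), mu j ≤
          ∑ j ∈ Finset.univ.filter (fun j => j ≤ i), lam j) ∧
      ∑ j, mu j = ∑ j, lam j := by
  obtain ⟨σ, hσ⟩ := hlam_eig
  obtain ⟨τ, hτ⟩ := hmu_diag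
  set M : Matrix (Fin n) (Fin n) ℝ :=
    of fun i j => ‖(hH.eigenvectorUnitary : Matrix (Fin n) (Fin n) ℂ) i j‖ ^ 2
  have hM : M.submatrix τ σ ∈ doublyStochastic ℝ (Fin n) :=
    reindex_mem_doublyStochastic (e₁ := τ.symm) (e₂ := σ.symm)
      (norm_sq_apply_mem_doublyStochastic_of_mem_unitaryGroup hH.eigenvectorUnitary.2)
  have hmu : mu = M.submatrix τ σ *ᵥ lam := by
    ext i
    rw [hτ, ← RCLike.re_to_complex, hH.re_apply_self_eq_sum_norm_sq_mul_eigenvalues,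
      ← Equiv.sum_comp σ]
    simp [mulVec, dotProduct, M, hσ]
  simp only [hmu, filter_ge_eq_Iic]
  exact ⟨sum_Iic_mulVec_le_of_mem_doublyStochastic hM hlam,
    sum_mulVec_of_mem_doublyStochastic hM⟩

/-- Schur's theorem: the diagonal of a Hermitian matrix, arranged in decreasing
order, is majorized by the eigenvalues arranged in decreasing order. -/
theorem schur_diagonal_majorized_by_eigenvalues {n : ℕ}
    (H : Matrix (Fin n) (Fin n) ℂ) (hH : H.IsHermitian)
    (lam mu : Fin n → ℝ) (hlam : Antitone lam) (hmu : Antitone mu)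
    (hlam_eig : ∃ σ : Equiv.Perm (Fin n), ∀ i, lam i = hH.eigenvalues (σ i))
    (hmu_diag : ∃ τ : Equiv.Perm (Fin n), ∀ i, mu i = (H (τ i) (τ i)).re) :
    (∀ i : Fin n,
        ∑ j ∈ Finset.univ.filter (fun j => j ≤ i), mu j ≤
          ∑ j ∈ Finset.univ.filter (fun j => j ≤ i), lam j) ∧
      ∑ j, mu j = ∑ j, lam j :=
  schur_diagonal_majorized_by_eigenvalues_general H hH lam mu hlam hlam_eig hmu_diag
end

section
/- Every n×n complex symmetric matrix B (Bᵀ = B) admits a decomposition B = U · diag(λ₁,...,λₙ) · Uᵀ, where U is an n×n unitary matrix and λ₁,...,λₙ are complex numbers. -/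
/-!
The map `x ↦ B x̄` is conjugate-linear and, since `Bᵀ = B`, satisfies `⟪B x̄, y⟫ = ⟪B ȳ, x⟫`.
Its square `x ↦ B B̄ x` is linear, so it has an eigenvector `w`; the symmetry forces the
eigenvalue to be `s² = ‖B w̄‖² / ‖w‖²`, and then `B w̄ + s w` (or `i w`, if that vanishes) is a
coneigenvector `B v̄ = s v`. The orthogonal complement of a coneigenvector is again invariant, so
induction on the dimension gives an orthonormal basis `u₁, …, uₙ` of coneigenvectors
`B ūⱼ = μⱼ uⱼ`. For the unitary `U = [u₁ ⋯ uₙ]` this says `B Ū = U D`, that is `B = U D Uᵀ`.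
-/

open Matrix Module
open scoped InnerProductSpace ComplexConjugate

theorem Orthonormal.fin_cons {𝕜 E : Type*} [RCLike 𝕜] [NormedAddCommGroup E]
    [InnerProductSpace 𝕜 E] {k : ℕ} {v : Fin k → E} (hv : Orthonormal 𝕜 v) {u : E}
    (hu : ‖u‖ = 1) (huv : ∀ j, ⟪u, v j⟫_𝕜 = 0) :
    Orthonormal 𝕜 (Fin.cons u v : Fin (k + 1) → E) := by
  rw [orthonormal_iff_ite] at hv ⊢
  intro i j
  cases i using Fin.cases <;> cases j using Fin.cases <;>
    simp [hv, huv, inner_self_eq_norm_sq_to_K, hu, inner_eq_zero_symm.mp (huv _),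
      Fin.succ_ne_zero, (Fin.succ_ne_zero _).symm]

namespace LinearMap

variable {E : Type*} [NormedAddCommGroup E] [InnerProductSpace ℂ E]

theorem exists_coneigenvector_of_apply_apply_eq_sq_smul (f : E →ₗ⋆[ℂ] E) {w : E} (hw : w ≠ 0)
    {s : ℝ} (hfw : f (f w) = ((s ^ 2 : ℝ) : ℂ) • w) : ∃ v ≠ 0, f v = (s : ℂ) • v := by
  by_cases h : f w + (s : ℂ) • w = 0
  · refine ⟨Complex.I • w, smul_ne_zero Complex.I_ne_zero hw, ?_⟩
    rw [map_smulₛₗ, eq_neg_of_add_eq_zero_left h, smul_neg, smul_smul, smul_smul, ← neg_smul]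
    simp [mul_comm]
  · refine ⟨_, h, ?_⟩
    rw [map_add, map_smulₛₗ, hfw, Complex.conj_ofReal, smul_add, smul_smul, add_comm]
    push_cast
    ring_nf

def IsConjSymmetric (f : E →ₗ⋆[ℂ] E) : Prop :=
  ∀ x y, ⟪f x, y⟫_ℂ = ⟪f y, x⟫_ℂ

namespace IsConjSymmetric

variable {f : E →ₗ⋆[ℂ] E}

theorem restrict (hf : f.IsConjSymmetric) {K : Submodule ℂ E} (hK : ∀ x ∈ K, f x ∈ K) :
    (f.restrict hK).IsConjSymmetric :=
  fun x y => hf x y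

theorem mapsTo_orthogonal_span_singleton (hf : f.IsConjSymmetric) {u : E} {μ : ℝ}
    (hu : f u = (μ : ℂ) • u) : ∀ x ∈ (ℂ ∙ u)ᗮ, f x ∈ (ℂ ∙ u)ᗮ := by
  intro x hx
  rw [Submodule.mem_orthogonal_singleton_iff_inner_right] at hx ⊢
  rw [← inner_eq_zero_symm, hf, hu, inner_smul_left, hx, mul_zero]

theorem exists_coneigenvector [FiniteDimensional ℂ E] [Nontrivial E] (hf : f.IsConjSymmetric) :
    ∃ u : E, ‖u‖ = 1 ∧ ∃ μ : ℝ, f u = (μ : ℂ) • u := by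
  obtain ⟨t, ht⟩ := Module.End.exists_eigenvalue (f ∘ₛₗ f)
  obtain ⟨w, hw⟩ := ht.exists_hasEigenvector
  have hfw : f (f w) = t • w := hw.apply_eq_smul
  have hw0 : w ≠ 0 := hw.2
  have hnorm : (‖f w‖ : ℂ) ^ 2 = ‖w‖ ^ 2 * conj t := by
    simpa [hfw, inner_smul_left, inner_self_eq_norm_sq_to_K] using hf w (f w)
  have ht_sq : t = (((‖f w‖ / ‖w‖) ^ 2 : ℝ) : ℂ) := by
    have hw0' : (‖w‖ : ℂ) ≠ 0 := by simpa using hw0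
    rw [← Complex.conj_conj t, ← Complex.conj_ofReal]
    congr 1
    push_cast
    field_simp
    linear_combination hnorm.symm
  obtain ⟨v, hv, hfv⟩ := exists_coneigenvector_of_apply_apply_eq_sq_smul f hw0 (ht_sq ▸ hfw)
  refine ⟨(‖v‖⁻¹ : ℂ) • v, norm_smul_inv_norm hv, ‖f w‖ / ‖w‖, ?_⟩
  rw [map_smulₛₗ, hfv, ← Complex.ofReal_inv, Complex.conj_ofReal, smul_comm]

theorem exists_orthonormal_coneigenvectors (hf : f.IsConjSymmetric) [FiniteDimensional ℂ E]
    {k : ℕ} (hk : finrank ℂ E = k) :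
    ∃ v : Fin k → E, Orthonormal ℂ v ∧ ∃ μ : Fin k → ℝ, ∀ i, f (v i) = (μ i : ℂ) • v i := by
  induction k generalizing E with
  | zero => exact ⟨Fin.elim0, ⟨fun i => i.elim0, fun i => i.elim0⟩, Fin.elim0, fun i => i.elim0⟩
  | succ k ih =>
    have : Nontrivial E := Module.nontrivial_of_finrank_eq_succ hk
    have : Fact (finrank ℂ E = k + 1) := ⟨hk⟩
    obtain ⟨u, hu, μ, hfu⟩ := hf.exists_coneigenvector
    have hK := hf.mapsTo_orthogonal_span_singleton hfu
    obtain ⟨v, hv, ν, hfv⟩ := ih (hf.restrict hK)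
      (Submodule.finrank_orthogonal_span_singleton (norm_ne_zero_iff.mp (hu ▸ one_ne_zero)))
    refine ⟨Fin.cons u (fun j => (v j : E)), ?_, Fin.cons μ ν, fun i => ?_⟩
    · exact (hv.comp_linearIsometry (ℂ ∙ u)ᗮ.subtypeₗᵢ).fin_cons hu fun j =>
        Submodule.mem_orthogonal_singleton_iff_inner_right.mp (v j).2
    · cases i using Fin.cases with
      | zero => simpa using hfu
      | succ j => simpa using congrArg Subtype.val (hfv j)

theorem exists_orthonormalBasis_coneigenvectors (hf : f.IsConjSymmetric) [FiniteDimensional ℂ E]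
    {k : ℕ} (hk : finrank ℂ E = k) :
    ∃ (b : OrthonormalBasis (Fin k) ℂ E) (μ : Fin k → ℝ), ∀ i, f (b i) = (μ i : ℂ) • b i := by
  obtain ⟨v, hv, μ, hfv⟩ := hf.exists_orthonormal_coneigenvectors hk
  refine ⟨.mk hv (hv.linearIndependent.span_eq_top_of_card_eq_finrank' ?_).ge, μ, ?_⟩
  · simp [hk]
  · simpa using hfv

end IsConjSymmetric

end LinearMap

namespace Matrix

variable {ι : Type*} [Fintype ι]

def toEuclideanConjLin (B : Matrix ι ι ℂ) : EuclideanSpace ℂ ι →ₗ⋆[ℂ] EuclideanSpace ℂ ι where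
  toFun x := WithLp.toLp 2 (B *ᵥ star (WithLp.ofLp x))
  map_add' x y := by simp [mulVec_add]
  map_smul' c x := by simp [mulVec_smul]

theorem toEuclideanConjLin_apply (B : Matrix ι ι ℂ) (x : EuclideanSpace ℂ ι) (i : ι) :
    B.toEuclideanConjLin x i = ∑ j, B i j * conj (x j) := by
  simp [toEuclideanConjLin, mulVec, dotProduct]

theorem IsSymm.isConjSymmetric_toEuclideanConjLin {B : Matrix ι ι ℂ} (hB : B.IsSymm) :
    B.toEuclideanConjLin.IsConjSymmetric := by
  intro x y
  simp only [PiLp.inner_apply, RCLike.inner_apply, toEuclideanConjLin_apply, map_sum, map_mul,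
    Complex.conj_conj, Finset.mul_sum]
  rw [Finset.sum_comm]
  refine Finset.sum_congr rfl fun i _ => Finset.sum_congr rfl fun j _ => ?_
  rw [hB.apply i j]
  ring

end Matrix

/-- Autonne–Takagi decomposition: every complex symmetric matrix `B` can be
written as `B = U * diag(λ) * Uᵀ` with `U` unitary. -/
theorem takagi_decomposition {n : ℕ}
    (B : Matrix (Fin n) (Fin n) ℂ) (hB : Bᵀ = B) :
    ∃ (U : Matrix (Fin n) (Fin n) ℂ) (d : Fin n → ℂ),
      U ∈ Matrix.unitaryGroup (Fin n) ℂ ∧ B = U * Matrix.diagonal d * Uᵀ := by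
  obtain ⟨b, μ, hbμ⟩ := IsSymm.isConjSymmetric_toEuclideanConjLin hB
    |>.exists_orthonormalBasis_coneigenvectors finrank_euclideanSpace_fin
  set U := (EuclideanSpace.basisFun (Fin n) ℂ).toBasis.toMatrix b
  have hU : U ∈ unitaryGroup (Fin n) ℂ := OrthonormalBasis.toMatrix_orthonormalBasis_mem_unitary _ _
  have hBU : B * Uᴴᵀ = U * diagonal (fun i => (μ i : ℂ)) := by
    ext i j
    have hcol := congrArg (· i) (hbμ j)
    rw [toEuclideanConjLin_apply] at hcol
    rw [mul_diagonal]
    simpa [U, mul_apply, Basis.toMatrix_apply, mul_comm] using hcol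
  refine ⟨U, fun i => (μ i : ℂ), hU, ?_⟩
  calc B = B * (U * Uᴴ)ᵀ := by
        rw [← star_eq_conjTranspose, mem_unitaryGroup_iff.mp hU, transpose_one, mul_one]
    _ = U * diagonal (fun i => (μ i : ℂ)) * Uᵀ := by rw [transpose_mul, ← mul_assoc, hBU]
end
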